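/- arXiv:1911.05049 — 5 statements merged into one kernel-verified Lean document; each statement's English description precedes it below -/
import Mathlib

section
/- Let n ≥ 1 and let S and T be standard Young tableaux of shape (n,n) with S ≤ T in the tableau-graph order. Let m be the column matching of T, and let w be any noncrossing perfect matching of {1,…,2n} whose set of arc-minima equals the set of first-row entries of S. Then w is reachable from m, i.e., w can be obtained from m by a finite (possibly empty) sequence of resolution steps. -/
/-- A standard Young tableau of shape `(n,n)`: a filling of a `2 × n` array with the
integers `1, …, 2n`, each used exactly once, strictly increasing along rows and columns. -/
structure SYT (n : ℕ) where
  entry : Fin 2 → Fin n → ℕ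
  mem_range : ∀ i j, entry i j ∈ Finset.Icc 1 (2 * n)
  inj : Function.Injective (fun p : Fin 2 × Fin n => entry p.1 p.2)
  surj : ∀ k ∈ Finset.Icc 1 (2 * n), ∃ i j, entry i j = k
  row_mono : ∀ i : Fin 2, StrictMono (entry i)
  col_lt : ∀ j : Fin n, entry 0 j < entry 1 j

/-- A perfect matching of `{1, …, 2n}`, with each arc recorded as an ordered pair
`(min, max)`. -/
structure Matching (n : ℕ) where
  arcs : Finset (ℕ × ℕ)
  arc_lt : ∀ p ∈ arcs, p.1 < p.2
  arc_mem : ∀ p ∈ arcs, p.1 ∈ Finset.Icc 1 (2 * n) ∧ p.2 ∈ Finset.Icc 1 (2 * n)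
  cover : ∀ k ∈ Finset.Icc 1 (2 * n), ∃! p : ℕ × ℕ, p ∈ arcs ∧ (k = p.1 ∨ k = p.2)

/-- Arcs `{a,c}` and `{b,d}` (each written `(min, max)`) cross when `a < b < c < d`. -/
def Crosses (p q : ℕ × ℕ) : Prop := p.1 < q.1 ∧ q.1 < p.2 ∧ p.2 < q.2

/-- A matching is noncrossing when no two of its arcs cross. -/
def Noncrossing {n : ℕ} (m : Matching n) : Prop :=
  ∀ p ∈ m.arcs, ∀ q ∈ m.arcs, ¬ Crosses p q

/-- The set of arc-minima (smaller endpoints of the arcs) of a matching. -/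
def arcMinima {n : ℕ} (m : Matching n) : Finset ℕ := m.arcs.image Prod.fst

/-- The set of entries of the first row of a tableau. -/
def firstRow {n : ℕ} (T : SYT n) : Finset ℕ := Finset.univ.image (T.entry 0)

/-- The arcs of the column matching of a tableau: the two entries of each column. -/
def columnArcs {n : ℕ} (T : SYT n) : Finset (ℕ × ℕ) :=
  Finset.univ.image (fun j : Fin n => (T.entry 0 j, T.entry 1 j))

/-- `ResPair m m₁ m₂` : `m` has a crossing pair of arcs `{a,c}, {b,d}` (`a<b<c<d`),
`m₁` is obtained by replacing them with `{a,b}, {c,d}`, and `m₂` by replacing them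
with `{a,d}, {b,c}`. -/
def ResPair {n : ℕ} (m m₁ m₂ : Matching n) : Prop :=
  ∃ a b c d : ℕ, a < b ∧ b < c ∧ c < d ∧ (a, c) ∈ m.arcs ∧ (b, d) ∈ m.arcs ∧
    m₁.arcs = (m.arcs \ {(a, c), (b, d)}) ∪ {(a, b), (c, d)} ∧
    m₂.arcs = (m.arcs \ {(a, c), (b, d)}) ∪ {(a, d), (b, c)}

/-- A single resolution step. -/
def ResStep {n : ℕ} (m m' : Matching n) : Prop :=
  ∃ m₁ m₂ : Matching n, ResPair m m₁ m₂ ∧ (m' = m₁ ∨ m' = m₂)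

/-- `w` is reachable from `m` by a finite (possibly empty) sequence of resolution steps. -/
def Reachable {n : ℕ} (m w : Matching n) : Prop := Relation.ReflTransGen ResStep m w

/-- Directed edge of the tableau graph: `T` is obtained from `S` by swapping `i` and
`i+1`, where `i` is in the bottom row of `S` and `i+1` is in the top row of `S`. -/
def Edge {n : ℕ} (S T : SYT n) : Prop :=
  ∃ i : ℕ, (∃ j : Fin n, S.entry 1 j = i) ∧ (∃ j : Fin n, S.entry 0 j = i + 1) ∧
    ∀ p q, T.entry p q =
      if S.entry p q = i then i + 1 else if S.entry p q = i + 1 then i else S.entry p q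

/-- The tableau-graph partial order: existence of a directed path. -/
def TabLE {n : ℕ} (S T : SYT n) : Prop := Relation.ReflTransGen Edge S T

/-!
Each edge `S → T` of the tableau graph is undone by one resolution step of column matchings:
the two columns `(a, i+1), (i, d)` of `T` touched by the swap cross, and resolving them into
`(a, i), (i+1, d)` gives the columns of `S`. Hence the column matching of `S` is reachable
from that of `T`.

Resolving a crossing `{a,c}, {b,d}` into the nested pair `{a,d}, {b,c}` keeps the arc-minima and
lowers `∑ a * c` over the arcs `(a, c)` (as `a d + b c < a c + b d`), so repeating it reaches a
noncrossing matching whose arc-minima are the first row of `S`. A noncrossing matching is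
determined by its arc-minima, so this is `w`.
-/

theorem Finset.image_univ_eq_sdiff_union_of_eq_off {ι α : Type*} [Fintype ι] [DecidableEq α]
    {f g : ι → α} (hf : Function.Injective f) {j j' : ι}
    (hfg : ∀ q, q ≠ j → q ≠ j' → g q = f q) :
    Finset.univ.image g = (Finset.univ.image f \ {f j, f j'}) ∪ {g j, g j'} := by
  ext x
  simp only [Finset.mem_union, Finset.mem_sdiff, Finset.mem_image, Finset.mem_univ, true_and,
    Finset.mem_insert, Finset.mem_singleton]
  constructor
  · rintro ⟨q, rfl⟩
    by_cases hqj : q = j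
    · exact .inr (.inl (by rw [hqj]))
    by_cases hqj' : q = j'
    · exact .inr (.inr (by rw [hqj']))
    rw [hfg q hqj hqj']
    exact .inl ⟨⟨q, rfl⟩, by rintro (h | h) <;> simp_all [hf.eq_iff]⟩
  · rintro (⟨⟨q, rfl⟩, hq⟩ | rfl | rfl)
    · exact ⟨q, hfg q (by rintro rfl; simp at hq) (by rintro rfl; simp at hq)⟩
    · exact ⟨j, rfl⟩
    · exact ⟨j', rfl⟩

namespace Matching

variable {n : ℕ} {m : Matching n}

theorem ext {m' : Matching n} (h : m.arcs = m'.arcs) : m = m' := by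
  cases m
  cases m'
  subst h
  rfl

theorem eq_of_mem_of_mem {p q : ℕ × ℕ} (hp : p ∈ m.arcs) (hq : q ∈ m.arcs) {k : ℕ}
    (hkp : k = p.1 ∨ k = p.2) (hkq : k = q.1 ∨ k = q.2) : p = q := by
  have hk : k ∈ Finset.Icc 1 (2 * n) := by
    rcases hkp with rfl | rfl
    exacts [(m.arc_mem p hp).1, (m.arc_mem p hp).2]
  exact (m.cover k hk).unique ⟨hp, hkp⟩ ⟨hq, hkq⟩

theorem fst_mem_arcMinima {p : ℕ × ℕ} (hp : p ∈ m.arcs) : p.1 ∈ arcMinima m :=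
  Finset.mem_image_of_mem _ hp

theorem exists_mem_of_mem_arcMinima {k : ℕ} (hk : k ∈ arcMinima m) :
    ∃ y, (k, y) ∈ m.arcs := by
  obtain ⟨⟨x, y⟩, hp, rfl⟩ := Finset.mem_image.1 hk
  exact ⟨y, hp⟩

theorem snd_notMem_arcMinima {p : ℕ × ℕ} (hp : p ∈ m.arcs) : p.2 ∉ arcMinima m := by
  intro h
  obtain ⟨y, hq⟩ := exists_mem_of_mem_arcMinima h
  have h₁ := congrArg Prod.fst (eq_of_mem_of_mem hp hq (.inr rfl) (.inl rfl))
  exact (m.arc_lt p hp).ne h₁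

theorem exists_mem_of_notMem_arcMinima {k : ℕ} (hk : k ∈ Finset.Icc 1 (2 * n))
    (hkm : k ∉ arcMinima m) : ∃ x, (x, k) ∈ m.arcs := by
  obtain ⟨⟨x, y⟩, ⟨hp, rfl | rfl⟩, -⟩ := m.cover k hk
  · exact absurd (fst_mem_arcMinima hp) hkm
  · exact ⟨x, hp⟩

theorem exists_arcs_eq_sdiff_union {u v r s : ℕ × ℕ} (hu : u ∈ m.arcs) (hv : v ∈ m.arcs)
    (hr : r.1 < r.2) (hs : s.1 < s.2)
    (hends : ∀ k, (k = r.1 ∨ k = r.2) ∨ (k = s.1 ∨ k = s.2) ↔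
      (k = u.1 ∨ k = u.2) ∨ (k = v.1 ∨ k = v.2))
    (hrs : ∀ k, ¬ ((k = r.1 ∨ k = r.2) ∧ (k = s.1 ∨ k = s.2))) :
    ∃ m' : Matching n, m'.arcs = (m.arcs \ {u, v}) ∪ {r, s} := by
  have hmem : ∀ p, p ∈ (m.arcs \ {u, v}) ∪ {r, s} ↔
      (p ∈ m.arcs ∧ p ≠ u ∧ p ≠ v) ∨ p = r ∨ p = s := by
    intro p
    simp only [Finset.mem_union, Finset.mem_sdiff, Finset.mem_insert, Finset.mem_singleton]
    tauto
  have hrange : ∀ k, (k = u.1 ∨ k = u.2) ∨ (k = v.1 ∨ k = v.2) →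
      k ∈ Finset.Icc 1 (2 * n) := by
    rintro k ((rfl | rfl) | (rfl | rfl))
    exacts [(m.arc_mem u hu).1, (m.arc_mem u hu).2, (m.arc_mem v hv).1, (m.arc_mem v hv).2]
  refine ⟨⟨_, fun p hp => ?_, fun p hp => ?_, fun k hk => ?_⟩, rfl⟩
  · rcases (hmem p).1 hp with ⟨hp, -⟩ | rfl | rfl
    exacts [m.arc_lt p hp, hr, hs]
  · rcases (hmem p).1 hp with ⟨hp, -⟩ | rfl | rfl
    · exact m.arc_mem p hp
    all_goals exact ⟨hrange _ ((hends _).1 (by tauto)), hrange _ ((hends _).1 (by tauto))⟩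
  obtain ⟨p, ⟨hp, hkp⟩, hpu⟩ := m.cover k hk
  by_cases hkuv : (k = u.1 ∨ k = u.2) ∨ (k = v.1 ∨ k = v.2)
  · -- `k` is an endpoint of exactly one of `r, s`, and of no surviving old arc.
    have hold : ∀ q ∈ m.arcs, (k = q.1 ∨ k = q.2) → q = u ∨ q = v := fun q hq hkq => by
      rcases hkuv with hku | hkv
      · exact .inl ((hpu q ⟨hq, hkq⟩).trans (hpu u ⟨hu, hku⟩).symm)
      · exact .inr ((hpu q ⟨hq, hkq⟩).trans (hpu v ⟨hv, hkv⟩).symm)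
    rcases (hends k).2 hkuv with hkr | hks
    · refine ⟨r, ⟨(hmem r).2 (.inr (.inl rfl)), hkr⟩, fun q ⟨hq, hkq⟩ => ?_⟩
      rcases (hmem q).1 hq with ⟨hq, hqu, hqv⟩ | rfl | rfl
      · exact absurd (hold q hq hkq) (by tauto)
      · rfl
      · exact absurd ⟨hkr, hkq⟩ (hrs k)
    · refine ⟨s, ⟨(hmem s).2 (.inr (.inr rfl)), hks⟩, fun q ⟨hq, hkq⟩ => ?_⟩
      rcases (hmem q).1 hq with ⟨hq, hqu, hqv⟩ | rfl | rfl
      · exact absurd (hold q hq hkq) (by tauto)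
      · exact absurd ⟨hkq, hks⟩ (hrs k)
      · rfl
  · have hpu' : p ≠ u ∧ p ≠ v := by
      constructor <;> rintro rfl <;> exact hkuv (by tauto)
    refine ⟨p, ⟨(hmem p).2 (.inl ⟨hp, hpu'⟩), hkp⟩, fun q ⟨hq, hkq⟩ => ?_⟩
    rcases (hmem q).1 hq with ⟨hq, -⟩ | rfl | rfl
    · exact hpu q ⟨hq, hkq⟩
    all_goals exact absurd ((hends k).1 (by tauto)) hkuv

theorem exists_resPair {a b c d : ℕ} (hab : a < b) (hbc : b < c) (hcd : c < d)
    (hac : (a, c) ∈ m.arcs) (hbd : (b, d) ∈ m.arcs) :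
    ∃ m₁ m₂ : Matching n, ResPair m m₁ m₂ ∧
      m₁.arcs = (m.arcs \ {(a, c), (b, d)}) ∪ {(a, b), (c, d)} ∧
      m₂.arcs = (m.arcs \ {(a, c), (b, d)}) ∪ {(a, d), (b, c)} := by
  obtain ⟨m₁, hm₁⟩ := exists_arcs_eq_sdiff_union (r := (a, b)) (s := (c, d)) hac hbd hab hcd
    (fun k => by dsimp only; tauto) (fun k => by dsimp only; omega)
  obtain ⟨m₂, hm₂⟩ := exists_arcs_eq_sdiff_union (r := (a, d)) (s := (b, c)) hac hbd
    (by dsimp only; omega) hbc (fun k => by dsimp only; tauto) (fun k => by dsimp only; omega)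
  exact ⟨m₁, m₂, ⟨a, b, c, d, hab, hbc, hcd, hac, hbd, hm₁, hm₂⟩, hm₁, hm₂⟩

theorem arcMinima_eq_of_arcs_eq {m' : Matching n} {a b c d : ℕ}
    (hac : (a, c) ∈ m.arcs) (hbd : (b, d) ∈ m.arcs)
    (h : m'.arcs = (m.arcs \ {(a, c), (b, d)}) ∪ {(a, d), (b, c)}) :
    arcMinima m' = arcMinima m := by
  have hsub : {(a, c), (b, d)} ⊆ m.arcs := Finset.insert_subset hac (by simpa using hbd)
  rw [arcMinima, arcMinima, h, ← Finset.sdiff_union_of_subset hsub, Finset.image_union,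
    Finset.image_union, Finset.sdiff_union_of_subset hsub]
  simp

def weight (m : Matching n) : ℕ := ∑ p ∈ m.arcs, p.1 * p.2

theorem weight_lt_of_arcs_eq {m' : Matching n} {a b c d : ℕ} (hab : a < b) (hcd : c < d)
    (hac : (a, c) ∈ m.arcs) (hbd : (b, d) ∈ m.arcs)
    (h : m'.arcs = (m.arcs \ {(a, c), (b, d)}) ∪ {(a, d), (b, c)}) :
    weight m' < weight m := by
  have hsub : {(a, c), (b, d)} ⊆ m.arcs := Finset.insert_subset hac (by simpa using hbd)
  have hold := Finset.sum_sdiff (f := fun p : ℕ × ℕ => p.1 * p.2) hsub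
  have hnew := Finset.sum_union_inter (f := fun p : ℕ × ℕ => p.1 * p.2)
    (s₁ := m.arcs \ {(a, c), (b, d)}) (s₂ := {(a, d), (b, c)})
  rw [Finset.sum_pair (by simp; omega)] at hold hnew
  dsimp only at hold hnew
  have key : a * d + b * c < a * c + b * d := by nlinarith
  simp only [weight, h]
  omega

end Matching

namespace Noncrossing

variable {n : ℕ} {w w' : Matching n}

/-- If `x` is matched to `y` in `w` and to `y' > y` in `w'`, then `y` is matched in `w'` to some
`x'' ∈ (x, y)`, which in turn is matched in `w` to some `y'' ∈ (x'', y)`: a shorter discrepancy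
of the same kind. -/
theorem not_lt_of_arcMinima_eq (hw : Noncrossing w) (hw' : Noncrossing w')
    (hM : arcMinima w = arcMinima w') {x y y' : ℕ} (h : (x, y) ∈ w.arcs)
    (h' : (x, y') ∈ w'.arcs) : ¬ y < y' := by
  intro hlt
  induction hk : y - x using Nat.strong_induction_on generalizing x y y' with
  | _ k ih =>
  have hxy := w.arc_lt _ h
  have hy : y ∉ arcMinima w' := hM ▸ w.snd_notMem_arcMinima h
  obtain ⟨x'', hq⟩ := w'.exists_mem_of_notMem_arcMinima (w.arc_mem _ h).2 hy
  have hx''y := w'.arc_lt _ hq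
  have hx''x : x'' ≠ x := by
    rintro rfl
    have := w'.eq_of_mem_of_mem hq h' (.inl rfl) (.inl rfl)
    simp_all
  have hxx'' : x < x'' := by
    by_contra hle
    exact hw' _ hq _ h' ⟨by dsimp only; omega, hxy, hlt⟩
  obtain ⟨y'', hq''⟩ := w.exists_mem_of_mem_arcMinima (hM ▸ w'.fst_mem_arcMinima hq)
  have hy''y : y'' ≠ y := by
    rintro rfl
    have := w.eq_of_mem_of_mem hq'' h (.inr rfl) (.inr rfl)
    simp_all
  have hy''lt : y'' < y := by
    by_contra hle
    exact hw _ h _ hq'' ⟨hxx'', hx''y, by dsimp only; omega⟩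
  exact ih (y'' - x'') (by omega) hq'' hq hy''lt rfl

theorem arcs_subset_of_arcMinima_eq (hw : Noncrossing w) (hw' : Noncrossing w')
    (hM : arcMinima w = arcMinima w') : w.arcs ⊆ w'.arcs := by
  rintro ⟨x, y⟩ h
  obtain ⟨y', h'⟩ := w'.exists_mem_of_mem_arcMinima (hM ▸ w.fst_mem_arcMinima h)
  obtain rfl : y = y' := le_antisymm
    (not_lt.1 (not_lt_of_arcMinima_eq hw' hw hM.symm h' h))
    (not_lt.1 (not_lt_of_arcMinima_eq hw hw' hM h h'))
  exact h'

theorem eq_of_arcMinima_eq (hw : Noncrossing w) (hw' : Noncrossing w')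
    (hM : arcMinima w = arcMinima w') : w = w' :=
  Matching.ext ((arcs_subset_of_arcMinima_eq hw hw' hM).antisymm
    (arcs_subset_of_arcMinima_eq hw' hw hM.symm))

theorem reachable_of_arcMinima_eq {m : Matching n} (hw : Noncrossing w)
    (hM : arcMinima m = arcMinima w) : Reachable m w := by
  induction hk : m.weight using Nat.strong_induction_on generalizing m with
  | _ k ih =>
  by_cases hm : Noncrossing m
  · rw [hm.eq_of_arcMinima_eq hw hM]
    exact .refl
  simp only [Noncrossing, not_forall, not_not] at hm
  obtain ⟨⟨a, c⟩, hac, ⟨b, d⟩, hbd, hab, hbc, hcd⟩ := hm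
  obtain ⟨m₁, m₂, hres, -, hm₂⟩ := m.exists_resPair hab hbc hcd hac hbd
  refine .head ⟨m₁, m₂, hres, .inr rfl⟩ (ih _ ?_ ?_ rfl)
  · exact hk ▸ Matching.weight_lt_of_arcs_eq hab hcd hac hbd hm₂
  · rw [Matching.arcMinima_eq_of_arcs_eq hac hbd hm₂, hM]

end Noncrossing

namespace SYT

variable {n : ℕ}

theorem eq_of_entry_eq (T : SYT n) {i i' : Fin 2} {j j' : Fin n}
    (h : T.entry i j = T.entry i' j') : i = i' ∧ j = j' :=
  Prod.ext_iff.1 (T.inj (a₁ := (i, j)) (a₂ := (i', j')) h)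

theorem column_injective (T : SYT n) :
    Function.Injective (fun j => (T.entry 0 j, T.entry 1 j)) :=
  fun _ _ h => (T.row_mono 0).injective (Prod.ext_iff.1 h).1

def columnMatching (T : SYT n) : Matching n where
  arcs := columnArcs T
  arc_lt := by
    simp only [columnArcs, Finset.mem_image, Finset.mem_univ, true_and, forall_exists_index]
    rintro _ j rfl
    exact T.col_lt j
  arc_mem := by
    simp only [columnArcs, Finset.mem_image, Finset.mem_univ, true_and, forall_exists_index]
    rintro _ j rfl
    exact ⟨T.mem_range 0 j, T.mem_range 1 j⟩
  cover := by
    intro k hk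
    obtain ⟨i, j, rfl⟩ := T.surj k hk
    refine ⟨(T.entry 0 j, T.entry 1 j),
      ⟨Finset.mem_image_of_mem _ (Finset.mem_univ j), ?_⟩, ?_⟩
    · fin_cases i <;> simp
    · simp only [columnArcs, Finset.mem_image, Finset.mem_univ, true_and]
      rintro _ ⟨⟨j', rfl⟩, h | h⟩ <;> rw [(T.eq_of_entry_eq h).2]

theorem arcMinima_columnMatching (T : SYT n) : arcMinima T.columnMatching = firstRow T := by
  simp only [arcMinima, columnMatching, columnArcs, Finset.image_image]
  rfl

theorem _root_.Edge.resStep {S T : SYT n} (h : Edge S T) :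
    ResStep T.columnMatching S.columnMatching := by
  obtain ⟨i, ⟨j', hj'⟩, ⟨j, hj⟩, hT⟩ := h
  have hai : S.entry 0 j' < i := hj' ▸ S.col_lt j'
  have hid : i + 1 < S.entry 1 j := hj ▸ S.col_lt j
  have hfix : ∀ p q, S.entry p q ≠ i → S.entry p q ≠ i + 1 →
      T.entry p q = S.entry p q := by
    intro p q h₁ h₂
    rw [hT, if_neg h₁, if_neg h₂]
  have hcol : ∀ q, q ≠ j' → q ≠ j →
      (S.entry 0 q, S.entry 1 q) = (T.entry 0 q, T.entry 1 q) := by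
    intro q hqj' hqj
    have hne : ∀ p, S.entry p q ≠ i ∧ S.entry p q ≠ i + 1 := fun p =>
      ⟨fun h => hqj' (S.eq_of_entry_eq (h.trans hj'.symm)).2,
        fun h => hqj (S.eq_of_entry_eq (h.trans hj.symm)).2⟩
    rw [hfix 0 q (hne 0).1 (hne 0).2, hfix 1 q (hne 1).1 (hne 1).2]
  have hT0j' : T.entry 0 j' = S.entry 0 j' := hfix 0 j' (by omega) (by omega)
  have hT1j' : T.entry 1 j' = i + 1 := by rw [hT, hj', if_pos rfl]
  have hT0j : T.entry 0 j = i := by rw [hT, hj, if_neg (by omega), if_pos rfl]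
  have hT1j : T.entry 1 j = S.entry 1 j := hfix 1 j (by omega) (by omega)
  have hac : (S.entry 0 j', i + 1) ∈ T.columnMatching.arcs :=
    Finset.mem_image.2 ⟨j', Finset.mem_univ _, by rw [hT0j', hT1j']⟩
  have hbd : (i, S.entry 1 j) ∈ T.columnMatching.arcs :=
    Finset.mem_image.2 ⟨j, Finset.mem_univ _, by rw [hT0j, hT1j]⟩
  obtain ⟨m₁, m₂, hres, hm₁, -⟩ :=
    T.columnMatching.exists_resPair hai (Nat.lt_add_one i) hid hac hbd
  refine ⟨m₁, m₂, hres, .inl (Matching.ext ?_)⟩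
  simp only [hm₁, columnMatching, columnArcs]
  rw [Finset.image_univ_eq_sdiff_union_of_eq_off T.column_injective hcol,
    hT0j', hT1j', hT0j, hT1j, hj', hj]

end SYT

theorem TabLE.reachable_columnMatching {n : ℕ} {S T : SYT n} (h : TabLE S T) :
    Reachable T.columnMatching S.columnMatching := by
  induction h with
  | refl => exact .refl
  | tail _ hE ih => exact .head hE.resStep ih

theorem stmt0_general (n : ℕ) (S T : SYT n) (hST : TabLE S T)
    (m : Matching n) (hm : m.arcs = columnArcs T)
    (w : Matching n) (hw : Noncrossing w) (hmin : arcMinima w = firstRow S) :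
    Reachable m w := by
  obtain rfl : m = T.columnMatching := Matching.ext hm
  refine hST.reachable_columnMatching.trans (hw.reachable_of_arcMinima_eq ?_)
  rw [SYT.arcMinima_columnMatching, hmin]

/-- If `S ≤ T` in the tableau-graph order, `m` is the column matching of `T`, and `w`
is a noncrossing perfect matching whose arc-minima are the first-row entries of `S`,
then `w` is reachable from `m` by resolution steps. -/
theorem stmt0 (n : ℕ) (hn : 1 ≤ n) (S T : SYT n) (hST : TabLE S T)
    (m : Matching n) (hm : m.arcs = columnArcs T)
    (w : Matching n) (hw : Noncrossing w) (hmin : arcMinima w = firstRow S) :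
    Reachable m w :=
  stmt0_general n S T hST m hm w hw hmin
end

section
/- Let n ≥ 1 and let S and T be standard Young tableaux of shape (n,n) such that for every k with 1 ≤ k ≤ n, the k-th entry of the first row of S is greater than or equal to the k-th entry of the first row of T. Let m be the column matching of T, and let w be any noncrossing perfect matching of {1,…,2n} whose set of arc-minima equals the set of first-row entries of S. Then w is reachable from m by a finite (possibly empty) sequence of resolution steps. -/
/-!
The column matching `m` of `T` is nonnesting: its openers (the first row of `T`) are paired
with its closers in increasing order. The first row of `T` dominates the first row `O'` of
`S`: below every `v` it has at least as many elements. While the openers `O` of the current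
nonnesting matching differ from `O'`, some opener `i` with strict dominance at `i` is followed
by a closer `i + 1`; the arcs `(x, i + 1)` and `(i, y)` cross, and resolving them into
`(x, i), (i + 1, y)` moves the opener `i` to `i + 1`, keeps the matching nonnesting and the
dominance intact, and lowers the sum of the closers. Once the openers are `O'`, resolving any
crossing `(a, c), (b, d)` into `(a, d), (b, c)` keeps the openers and lowers `∑ a * c`, so this
ends at a noncrossing matching with openers `O'`. A noncrossing matching is determined by its
openers, so that matching is `w`.
-/

open Finset
open scoped symmDiff

lemma Finset.sum_sdiff_pair_union_pair {α β : Type*} [DecidableEq α] [AddCommMonoid β]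
    {A : Finset α} {p q p' q' : α} (g : α → β) (hp : p ∈ A) (hq : q ∈ A) (hpq : p ≠ q)
    (hp' : p' ∉ A) (hq' : q' ∉ A) (hpq' : p' ≠ q') :
    ∑ x ∈ A \ {p, q} ∪ {p', q'}, g x + (g p + g q) = ∑ x ∈ A, g x + (g p' + g q') := by
  have hdisj : Disjoint (A \ {p, q}) {p', q'} := by
    simp [disjoint_insert_right, hp', hq']
  rw [sum_union hdisj, sum_pair hpq', ← sum_pair hpq, add_right_comm,
    sum_sdiff (insert_subset_iff.2 ⟨hp, singleton_subset_iff.2 hq⟩)]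

theorem Relation.exists_reflTransGen_of_descent {α : Type*} {r : α → α → Prop}
    {I P : α → Prop} (f : α → ℕ) (step : ∀ x, I x → ¬ P x → ∃ y, r x y ∧ I y ∧ f y < f x)
    {x : α} (hx : I x) : ∃ y, Relation.ReflTransGen r x y ∧ I y ∧ P y := by
  induction x using (measure f).wf.induction with
  | h x ih =>
    by_cases hP : P x
    · exact ⟨x, .refl, hx, hP⟩
    obtain ⟨y, hxy, hy, hlt⟩ := step x hx hP
    obtain ⟨z, hyz, hz, hPz⟩ := ih y hlt hy
    exact ⟨z, .head hxy hyz, hz, hPz⟩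

def Dominates (O O' : Finset ℕ) : Prop := ∀ v, #(O'.filter (· ≤ v)) ≤ #(O.filter (· ≤ v))

/-- The least element of `O ∆ O'` lies in `O` by dominance, so `O` has points of strict
dominance; the largest of them is not followed by another element of `O`. -/
lemma Dominates.exists_strict_of_ne {O O' : Finset ℕ} (h : Dominates O O') (hne : O ≠ O') :
    ∃ i ∈ O, i + 1 ∉ O ∧ #(O'.filter (· ≤ i)) < #(O.filter (· ≤ i)) := by
  have hlt : ∀ {P Q : Finset ℕ} {x : ℕ}, x ∈ P → x ∉ Q → (∀ y < x, y ∈ Q → y ∈ P) →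
      #(Q.filter (· ≤ x)) < #(P.filter (· ≤ x)) := by
    intro P Q x hxP hxQ hQP
    refine card_lt_card ⟨fun y hy => ?_, fun hsub => ?_⟩
    · simp only [mem_filter] at hy ⊢
      exact ⟨hQP y (lt_of_le_of_ne hy.2 fun e => hxQ (e ▸ hy.1)) hy.1, hy.2⟩
    · exact hxQ (mem_filter.1 (hsub (mem_filter.2 ⟨hxP, le_rfl⟩))).1
  have hD : (O ∆ O').Nonempty := symmDiff_nonempty.2 hne
  have hagree : ∀ y < (O ∆ O').min' hD, (y ∈ O ↔ y ∈ O') := by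
    intro y hy
    by_contra hy'
    exact (min'_le _ y (mem_symmDiff.2 (by tauto))).not_gt hy
  set St := O.filter fun i => #(O'.filter (· ≤ i)) < #(O.filter (· ≤ i))
  have hSt : St.Nonempty := by
    rcases mem_symmDiff.1 (min'_mem _ hD) with ⟨hx, hx'⟩ | ⟨hx, hx'⟩
    · exact ⟨_, mem_filter.2 ⟨hx, hlt hx hx' fun y hy => (hagree y hy).2⟩⟩
    · exact absurd (h _) (hlt hx hx' fun y hy => (hagree y hy).1).not_ge
  obtain ⟨hi, hilt⟩ := mem_filter.1 (St.max'_mem hSt)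
  refine ⟨_, hi, fun hi1 => ?_, hilt⟩
  set i := St.max' hSt
  have hO : #(O.filter (· ≤ i)) + 1 ≤ #(O.filter (· ≤ i + 1)) := by
    rw [← card_insert_of_notMem (s := O.filter (· ≤ i)) (a := i + 1) (by simp)]
    refine card_le_card (insert_subset_iff.2 ⟨mem_filter.2 ⟨hi1, le_rfl⟩, fun y hy => ?_⟩)
    simp only [mem_filter] at hy ⊢
    exact ⟨hy.1, by omega⟩
  have hO' : #(O'.filter (· ≤ i + 1)) ≤ #(O'.filter (· ≤ i)) + 1 := by
    refine (card_le_card fun y hy => ?_).trans (card_insert_le (i + 1) _)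
    simp only [mem_filter, mem_insert] at hy ⊢
    rcases Nat.lt_or_ge i y with h | h
    · exact Or.inl (by omega)
    · exact Or.inr ⟨hy.1, h⟩
  have := St.le_max' (i + 1) (mem_filter.2 ⟨hi1, by omega⟩)
  omega

def endpointCount (k : ℕ) (p : ℕ × ℕ) : ℕ := if k = p.1 ∨ k = p.2 then 1 else 0

lemma existsUnique_endpoint_iff (A : Finset (ℕ × ℕ)) (k : ℕ) :
    (∃! p, p ∈ A ∧ (k = p.1 ∨ k = p.2)) ↔ ∑ p ∈ A, endpointCount k p = 1 := by
  simp only [endpointCount, ← card_filter, card_eq_one_iff_existsUnique, mem_filter]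

namespace Matching

variable {n : ℕ}

lemma ext_arcs {m m' : Matching n} (h : m.arcs = m'.arcs) : m = m' := by
  cases m; cases m'; congr

lemma eq_of_common_endpoint (m : Matching n) {p q : ℕ × ℕ} (hp : p ∈ m.arcs)
    (hq : q ∈ m.arcs) {k : ℕ} (hkp : k = p.1 ∨ k = p.2) (hkq : k = q.1 ∨ k = q.2) : p = q := by
  have hk : k ∈ Icc 1 (2 * n) := by
    rcases hkp with rfl | rfl
    exacts [(m.arc_mem p hp).1, (m.arc_mem p hp).2]
  exact (m.cover k hk).unique ⟨hp, hkp⟩ ⟨hq, hkq⟩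

lemma eq_of_fst_eq (m : Matching n) {p q : ℕ × ℕ} (hp : p ∈ m.arcs) (hq : q ∈ m.arcs)
    (h : p.1 = q.1) : p = q :=
  m.eq_of_common_endpoint hp hq (Or.inl rfl) (Or.inl h)

lemma eq_of_snd_eq (m : Matching n) {p q : ℕ × ℕ} (hp : p ∈ m.arcs) (hq : q ∈ m.arcs)
    (h : p.2 = q.2) : p = q :=
  m.eq_of_common_endpoint hp hq (Or.inr rfl) (Or.inr h)

lemma fst_ne_snd (m : Matching n) {p q : ℕ × ℕ} (hp : p ∈ m.arcs) (hq : q ∈ m.arcs) :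
    p.1 ≠ q.2 := by
  intro h
  obtain rfl := m.eq_of_common_endpoint hp hq (Or.inl rfl) (Or.inr h)
  exact (m.arc_lt p hp).ne h

lemma exists_replace (m : Matching n) {p q p' q' : ℕ × ℕ} (hp : p ∈ m.arcs)
    (hq : q ∈ m.arcs) (hpq : p ≠ q) (hp' : p' ∉ m.arcs) (hq' : q' ∉ m.arcs) (hpq' : p' ≠ q')
    (hlt' : p'.1 < p'.2 ∧ q'.1 < q'.2)
    (hends : ∀ k, endpointCount k p + endpointCount k q = endpointCount k p' + endpointCount k q') :
    ∃ m' : Matching n, m'.arcs = m.arcs \ {p, q} ∪ {p', q'} ∧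
      ∀ g : ℕ × ℕ → ℕ,
        ∑ x ∈ m'.arcs, g x + (g p + g q) = ∑ x ∈ m.arcs, g x + (g p' + g q') := by
  have hsum := fun g : ℕ × ℕ → ℕ => sum_sdiff_pair_union_pair g hp hq hpq hp' hq' hpq'
  have hendpoint : ∀ k, (k = p'.1 ∨ k = p'.2 ∨ k = q'.1 ∨ k = q'.2) →
      k = p.1 ∨ k = p.2 ∨ k = q.1 ∨ k = q.2 := by
    intro k hk
    have := hends k
    simp only [endpointCount] at this
    split_ifs at this <;> omega
  have hmem : ∀ k, (k = p'.1 ∨ k = p'.2 ∨ k = q'.1 ∨ k = q'.2) → k ∈ Icc 1 (2 * n) := by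
    intro k hk
    rcases hendpoint k hk with rfl | rfl | rfl | rfl
    exacts [(m.arc_mem p hp).1, (m.arc_mem p hp).2, (m.arc_mem q hq).1, (m.arc_mem q hq).2]
  refine ⟨⟨m.arcs \ {p, q} ∪ {p', q'}, ?_, ?_, ?_⟩, rfl, hsum⟩
  · simp only [mem_union, mem_sdiff, mem_insert, mem_singleton]
    rintro r (⟨hr, -⟩ | rfl | rfl)
    exacts [m.arc_lt r hr, hlt'.1, hlt'.2]
  · simp only [mem_union, mem_sdiff, mem_insert, mem_singleton]
    rintro r (⟨hr, -⟩ | rfl | rfl)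
    · exact m.arc_mem r hr
    · exact ⟨hmem _ (by tauto), hmem _ (by tauto)⟩
    · exact ⟨hmem _ (by tauto), hmem _ (by tauto)⟩
  · intro k hk
    rw [existsUnique_endpoint_iff]
    have := hsum (endpointCount k)
    have := hends k
    have := (existsUnique_endpoint_iff _ _).1 (m.cover k hk)
    omega

lemma exists_resolutions (m : Matching n) {a b c d : ℕ} (hab : a < b) (hbc : b < c)
    (hcd : c < d) (hac : (a, c) ∈ m.arcs) (hbd : (b, d) ∈ m.arcs) :
    ∃ m₁ m₂ : Matching n, ResStep m m₁ ∧ ResStep m m₂ ∧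
      m₁.arcs = m.arcs \ {(a, c), (b, d)} ∪ {(a, b), (c, d)} ∧
      m₂.arcs = m.arcs \ {(a, c), (b, d)} ∪ {(a, d), (b, c)} ∧
      (∀ g : ℕ × ℕ → ℕ, ∑ x ∈ m₁.arcs, g x + (g (a, c) + g (b, d)) =
        ∑ x ∈ m.arcs, g x + (g (a, b) + g (c, d))) ∧
      (∀ g : ℕ × ℕ → ℕ, ∑ x ∈ m₂.arcs, g x + (g (a, c) + g (b, d)) =
        ∑ x ∈ m.arcs, g x + (g (a, d) + g (b, c))) := by
  have hne : ∀ {p q : ℕ × ℕ}, p.1 ≠ q.1 → p ≠ q := fun h he => h (congrArg Prod.fst he)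
  have fresh_fst : ∀ {r s : ℕ × ℕ}, s ∈ m.arcs → r.1 = s.1 → r.2 ≠ s.2 → r ∉ m.arcs :=
    fun hs h1 h2 hr => h2 (congrArg Prod.snd (m.eq_of_fst_eq hr hs h1))
  have fresh_snd : ∀ {r s : ℕ × ℕ}, s ∈ m.arcs → r.2 = s.2 → r.1 ≠ s.1 → r ∉ m.arcs :=
    fun hs h1 h2 hr => h2 (congrArg Prod.fst (m.eq_of_snd_eq hr hs h1))
  obtain ⟨m₁, h₁, hs₁⟩ := m.exists_replace (p' := (a, b)) (q' := (c, d)) hac hbd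
    (hne hab.ne) (fresh_fst hac rfl hbc.ne) (fresh_snd hbd rfl hbc.ne')
    (hne (hab.trans hbc).ne) ⟨hab, hcd⟩
    (fun k => by simp only [endpointCount]; split_ifs <;> omega)
  obtain ⟨m₂, h₂, hs₂⟩ := m.exists_replace (p' := (a, d)) (q' := (b, c)) hac hbd
    (hne hab.ne) (fresh_fst hac rfl hcd.ne') (fresh_fst hbd rfl hcd.ne)
    (hne hab.ne) ⟨hab.trans (hbc.trans hcd), hbc⟩
    (fun k => by simp only [endpointCount]; split_ifs <;> omega)
  have hpair : ResPair m m₁ m₂ := ⟨a, b, c, d, hab, hbc, hcd, hac, hbd, h₁, h₂⟩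
  exact ⟨m₁, m₂, ⟨m₁, m₂, hpair, Or.inl rfl⟩, ⟨m₁, m₂, hpair, Or.inr rfl⟩, h₁, h₂, hs₁, hs₂⟩

lemma card_filter_arcMinima (m : Matching n) (P : ℕ → Prop) [DecidablePred P] :
    #((arcMinima m).filter P) = #(m.arcs.filter fun p => P p.1) := by
  rw [arcMinima, filter_image]
  exact card_image_of_injOn fun p hp q hq h =>
    m.eq_of_fst_eq (mem_filter.1 hp).1 (mem_filter.1 hq).1 h

lemma card_endpoints (m : Matching n) {F : Finset (ℕ × ℕ)} (hF : F ⊆ m.arcs) :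
    #(F.image Prod.fst ∪ F.image Prod.snd) = 2 * #F := by
  have hdisj : Disjoint (F.image Prod.fst) (F.image Prod.snd) := by
    simp only [disjoint_left, mem_image]
    rintro _ ⟨p, hp, rfl⟩ ⟨q, hq, h⟩
    exact m.fst_ne_snd (hF hp) (hF hq) h.symm
  rw [card_union_of_disjoint hdisj,
    card_image_of_injOn fun p hp q hq h => m.eq_of_fst_eq (hF hp) (hF hq) h,
    card_image_of_injOn fun p hp q hq h => m.eq_of_snd_eq (hF hp) (hF hq) h, two_mul]

lemma le_two_mul_card_filter_fst_le (m : Matching n) {v : ℕ} (hv : v ≤ 2 * n) :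
    v ≤ 2 * #(m.arcs.filter fun p => p.1 ≤ v) := by
  rw [← m.card_endpoints (filter_subset _ _)]
  calc v = #(Icc 1 v) := by simp
    _ ≤ _ := card_le_card fun k hk => ?_
  simp only [mem_Icc] at hk
  obtain ⟨p, ⟨hp, hkp⟩, -⟩ := m.cover k (mem_Icc.2 ⟨hk.1, hk.2.trans hv⟩)
  have := m.arc_lt p hp
  simp only [mem_union, mem_image, mem_filter]
  rcases hkp with rfl | rfl
  · exact Or.inl ⟨p, ⟨hp, hk.2⟩, rfl⟩
  · exact Or.inr ⟨p, ⟨hp, by omega⟩, rfl⟩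

def Nonnesting (m : Matching n) : Prop :=
  ∀ p ∈ m.arcs, ∀ q ∈ m.arcs, p.1 < q.1 → p.2 < q.2

lemma Nonnesting.two_mul_card_filter_fst_le {m : Matching n} (hm : m.Nonnesting) {i : ℕ}
    (hi : (i, i + 1) ∈ m.arcs) : 2 * #(m.arcs.filter fun p => p.1 ≤ i) ≤ i + 1 := by
  rw [← m.card_endpoints (filter_subset _ _)]
  calc _ ≤ #(Icc 1 (i + 1)) := card_le_card fun k hk => ?_
    _ = i + 1 := by simp
  have hclosed : ∀ p ∈ m.arcs, p.1 ≤ i → 1 ≤ p.1 ∧ p.2 ≤ i + 1 := by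
    intro p hp hpi
    refine ⟨(mem_Icc.1 (m.arc_mem p hp).1).1, ?_⟩
    rcases hpi.lt_or_eq with h | h
    · exact (hm p hp _ hi h).le
    · rw [m.eq_of_fst_eq hp hi h]
  simp only [mem_union, mem_image, mem_filter] at hk
  rcases hk with ⟨p, ⟨hp, hpi⟩, rfl⟩ | ⟨p, ⟨hp, hpi⟩, rfl⟩ <;>
    have := hclosed p hp hpi <;> have := m.arc_lt p hp <;> simp only [mem_Icc] <;> omega

/-- The arcs of `M` opened by `i` fill `[1, i + 1]`, so there are at most `(i + 1) / 2` of them,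
while every matching opens at least `i / 2` arcs by `i`. -/
lemma Nonnesting.adjacent_notMem_of_card_lt {M M' : Matching n} (hM : M.Nonnesting) {i : ℕ}
    (hlt : #(M'.arcs.filter fun p => p.1 ≤ i) < #(M.arcs.filter fun p => p.1 ≤ i)) :
    (i, i + 1) ∉ M.arcs := by
  intro hi
  have h1 := hM.two_mul_card_filter_fst_le hi
  have h2 := M'.le_two_mul_card_filter_fst_le (v := i) (by
    have := (M.arc_mem _ hi).2
    simp only [mem_Icc] at this
    omega)
  omega

lemma Nonnesting.of_resolution {M M₁ : Matching n} (hM : M.Nonnesting) {x i y : ℕ}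
    (hxi : (x, i + 1) ∈ M.arcs) (hiy : (i, y) ∈ M.arcs)
    (h : M₁.arcs = M.arcs \ {(x, i + 1), (i, y)} ∪ {(x, i), (i + 1, y)}) :
    M₁.Nonnesting := by
  have hrest : ∀ r ∈ M.arcs, r ≠ (x, i + 1) → r ≠ (i, y) →
      (r.1 < x → r.2 < i) ∧ (x < r.1 → i < r.2) ∧
      (r.1 < i + 1 → r.2 < y) ∧ (i + 1 < r.1 → y < r.2) := by
    intro r hr h1 h2
    have e1 : r.1 ≠ i := fun e => h2 (M.eq_of_fst_eq hr hiy e)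
    have e2 : r.2 ≠ i + 1 := fun e => h1 (M.eq_of_snd_eq hr hxi e)
    have e3 : r.2 ≠ i := fun e => M.fst_ne_snd hiy hr e.symm
    have := hM r hr _ hxi
    have := hM _ hxi r hr
    have := hM r hr _ hiy
    have := hM _ hiy r hr
    simp only at *
    omega
  have hxlt := M.arc_lt _ hxi
  have hilt := M.arc_lt _ hiy
  intro r hr s hs hrs
  rw [h] at hr hs
  simp only [mem_union, mem_sdiff, mem_insert, mem_singleton, not_or] at hr hs
  rcases hr with ⟨hr, hr1, hr2⟩ | rfl | rfl <;> rcases hs with ⟨hs, hs1, hs2⟩ | rfl | rfl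
  · exact hM r hr s hs hrs
  all_goals first
    | (have := hrest r hr hr1 hr2; simp only at *; omega)
    | (have := hrest s hs hs1 hs2; simp only at *; omega)
    | (simp only at *; omega)

lemma Nonnesting.exists_resStep {M M' : Matching n} (hM : M.Nonnesting)
    (hdom : Dominates (arcMinima M) (arcMinima M')) (hne : arcMinima M ≠ arcMinima M') :
    ∃ M₁ : Matching n, ResStep M M₁ ∧ M₁.Nonnesting ∧
      Dominates (arcMinima M₁) (arcMinima M') ∧ ∑ p ∈ M₁.arcs, p.2 < ∑ p ∈ M.arcs, p.2 := by
  obtain ⟨i, hi, hi1, hlt⟩ := hdom.exists_strict_of_ne hne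
  rw [card_filter_arcMinima, card_filter_arcMinima] at hlt
  obtain ⟨y, hiy⟩ : ∃ y, (i, y) ∈ M.arcs := by
    obtain ⟨⟨i', y⟩, h, rfl⟩ := mem_image.1 hi
    exact ⟨y, h⟩
  have hi1I : i + 1 ∈ Icc 1 (2 * n) := by
    have := M.arc_lt _ hiy
    have := (M.arc_mem _ hiy).2
    simp only [mem_Icc] at *
    omega
  obtain ⟨⟨x, i''⟩, ⟨hxi, hk⟩, -⟩ := M.cover (i + 1) hi1I
  obtain rfl : i'' = i + 1 :=
    (hk.resolve_left fun h => hi1 (mem_image.2 ⟨_, hxi, h.symm⟩)).symm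
  have hii := hM.adjacent_notMem_of_card_lt hlt
  have hx : x < i := by
    have := M.arc_lt _ hxi
    have : x ≠ i := by rintro rfl; exact hii hxi
    simp only at *
    omega
  have hy : i + 1 < y := by
    have := M.arc_lt _ hiy
    have : y ≠ i + 1 := by rintro rfl; exact hii hiy
    simp only at *
    omega
  obtain ⟨M₁, -, hstep, -, harcs, -, hsum, -⟩ :=
    M.exists_resolutions hx (Nat.lt_succ_self i) hy hxi hiy
  refine ⟨M₁, hstep, hM.of_resolution hxi hiy harcs, fun v => ?_, ?_⟩
  · have hcount := hsum fun p => if p.1 ≤ v then 1 else 0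
    have hdomv := hdom v
    simp only [← card_filter] at hcount
    rw [card_filter_arcMinima, card_filter_arcMinima] at hdomv ⊢
    rcases eq_or_ne v i with rfl | hvi
    · simp only [le_refl, if_true, Nat.not_succ_le_self, if_false, hx.le] at hcount
      omega
    · split_ifs at hcount <;> omega
  · have := hsum Prod.snd
    omega

lemma Nonnesting.exists_reachable_arcMinima_eq {M M' : Matching n} (hM : M.Nonnesting)
    (hdom : Dominates (arcMinima M) (arcMinima M')) :
    ∃ M₁, Reachable M M₁ ∧ arcMinima M₁ = arcMinima M' := by
  obtain ⟨M₁, h, -, hM₁⟩ := Relation.exists_reflTransGen_of_descent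
    (I := fun N : Matching n => N.Nonnesting ∧ Dominates (arcMinima N) (arcMinima M'))
    (P := fun N => arcMinima N = arcMinima M') (fun N => ∑ p ∈ N.arcs, p.2)
    (fun _ ⟨hN, hd⟩ hne => by
      obtain ⟨N₁, hstep, hN₁, hd₁, hlt⟩ := hN.exists_resStep hd hne
      exact ⟨N₁, hstep, ⟨hN₁, hd₁⟩, hlt⟩)
    ⟨hM, hdom⟩
  exact ⟨M₁, h, hM₁⟩

lemma exists_resStep_of_not_noncrossing (M : Matching n) (h : ¬ Noncrossing M) :
    ∃ M₂ : Matching n, ResStep M M₂ ∧ arcMinima M₂ = arcMinima M ∧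
      ∑ p ∈ M₂.arcs, p.1 * p.2 < ∑ p ∈ M.arcs, p.1 * p.2 := by
  simp only [Noncrossing, not_forall, not_not] at h
  obtain ⟨⟨a, c⟩, hac, ⟨b, d⟩, hbd, hab, hbc, hcd⟩ := h
  obtain ⟨-, M₂, -, hstep, -, harcs, -, hsum⟩ := M.exists_resolutions hab hbc hcd hac hbd
  refine ⟨M₂, hstep, ?_, ?_⟩
  · have hsub : {(a, c), (b, d)} ⊆ M.arcs :=
      insert_subset_iff.2 ⟨hac, singleton_subset_iff.2 hbd⟩
    rw [arcMinima, arcMinima, harcs]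
    conv_rhs => rw [← sdiff_union_of_subset hsub]
    simp only [image_union, image_insert, image_singleton]
  · have := hsum fun p => p.1 * p.2
    have : a * d + b * c < a * c + b * d := by nlinarith
    simp only at *
    omega

lemma exists_reachable_noncrossing (M : Matching n) :
    ∃ w, Reachable M w ∧ Noncrossing w ∧ arcMinima w = arcMinima M := by
  obtain ⟨w, h, hmin, hw⟩ := Relation.exists_reflTransGen_of_descent
    (I := fun N : Matching n => arcMinima N = arcMinima M) (P := Noncrossing)
    (fun N => ∑ p ∈ N.arcs, p.1 * p.2)
    (fun N hN hnc => by
      obtain ⟨N₂, hstep, hmin, hlt⟩ := N.exists_resStep_of_not_noncrossing hnc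
      exact ⟨N₂, hstep, hmin.trans hN, hlt⟩)
    rfl
  exact ⟨w, h, hw, hmin⟩

lemma nonnesting_of_arcs_eq_columnArcs {T : SYT n} {m : Matching n}
    (hm : m.arcs = columnArcs T) : m.Nonnesting := by
  simp only [Nonnesting, hm, columnArcs, mem_image, mem_univ, true_and, forall_exists_index,
    forall_apply_eq_imp_iff]
  exact fun j j' h => T.row_mono 1 ((T.row_mono 0).lt_iff_lt.1 h)

lemma arcMinima_of_arcs_eq_columnArcs {T : SYT n} {m : Matching n}
    (hm : m.arcs = columnArcs T) : arcMinima m = firstRow T := by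
  rw [arcMinima, hm, columnArcs, image_image]
  rfl

end Matching

section Noncrossing

variable {n : ℕ}

lemma Noncrossing.snd_lt_of_inside {w : Matching n} (hw : Noncrossing w) {a c : ℕ}
    (hac : (a, c) ∈ w.arcs) {p : ℕ × ℕ} (hp : p ∈ w.arcs) (h1 : a < p.1) (h2 : p.1 < c) :
    p.2 < c := by
  have hne : p.2 ≠ c := fun h => by
    rw [w.eq_of_snd_eq hp hac h] at h1
    exact h1.false
  by_contra hge
  exact hw _ hac _ hp ⟨h1, h2, by omega⟩

lemma Noncrossing.lt_fst_of_inside {w : Matching n} (hw : Noncrossing w) {a c : ℕ}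
    (hac : (a, c) ∈ w.arcs) {p : ℕ × ℕ} (hp : p ∈ w.arcs) (h1 : a < p.2) (h2 : p.2 < c) :
    a < p.1 := by
  have hne : p.1 ≠ a := fun h => by
    rw [w.eq_of_fst_eq hp hac h] at h2
    exact h2.false
  by_contra hle
  exact hw _ hp _ hac ⟨by omega, h1, h2⟩

/-- If `c' < c`, the arcs of `w` and of `w'` opened inside `(a, c')` are equally many, since
they have the same openers; but those of `w` cover all of `(a, c']`, while those of `w'` stay
inside `(a, c')`. -/
lemma Noncrossing.snd_le_of_arcMinima_eq {w w' : Matching n} (hw : Noncrossing w)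
    (hw' : Noncrossing w') (hmin : arcMinima w = arcMinima w') {a c c' : ℕ}
    (hac : (a, c) ∈ w.arcs) (hac' : (a, c') ∈ w'.arcs) : c ≤ c' := by
  by_contra! hlt
  set F := w.arcs.filter fun p => a < p.1 ∧ p.1 < c'
  set F' := w'.arcs.filter fun p => a < p.1 ∧ p.1 < c'
  have hcard : #F = #F' := by
    rw [← w.card_filter_arcMinima fun k => a < k ∧ k < c',
      ← w'.card_filter_arcMinima fun k => a < k ∧ k < c', hmin]
  have hF' : F'.image Prod.fst ∪ F'.image Prod.snd ⊆ Ioo a c' := by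
    intro k hk
    simp only [F', mem_union, mem_image, mem_filter, mem_Ioo] at hk ⊢
    rcases hk with ⟨p, ⟨hp, hpa, hpc⟩, rfl⟩ | ⟨p, ⟨hp, hpa, hpc⟩, rfl⟩
    · exact ⟨hpa, hpc⟩
    · exact ⟨hpa.trans (w'.arc_lt p hp), hw'.snd_lt_of_inside hac' hp hpa hpc⟩
  have hc' : c' ∉ arcMinima w := by
    rw [hmin]
    intro h
    obtain ⟨p, hp, hpc⟩ := mem_image.1 h
    exact w'.fst_ne_snd hp hac' hpc
  have hF : Ioc a c' ⊆ F.image Prod.fst ∪ F.image Prod.snd := by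
    intro k hk
    rw [mem_Ioc] at hk
    have ha := (mem_Icc.1 (w.arc_mem _ hac).1).1
    have hc := (mem_Icc.1 (w'.arc_mem _ hac').2).2
    obtain ⟨p, ⟨hp, hkp⟩, -⟩ := w.cover k (mem_Icc.2 ⟨by omega, by omega⟩)
    simp only [F, mem_union, mem_image, mem_filter]
    rcases hkp with rfl | rfl
    · have : p.1 ≠ c' := fun h => hc' (mem_image.2 ⟨p, hp, h⟩)
      exact Or.inl ⟨p, ⟨hp, hk.1, by omega⟩, rfl⟩
    · exact Or.inr ⟨p, ⟨hp, hw.lt_fst_of_inside hac hp hk.1 (by omega),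
        (w.arc_lt p hp).trans_le hk.2⟩, rfl⟩
  have h1 := card_le_card hF
  have h2 := card_le_card hF'
  rw [w.card_endpoints (filter_subset _ _), Nat.card_Ioc] at h1
  rw [w'.card_endpoints (filter_subset _ _), Nat.card_Ioo] at h2
  change _ ≤ 2 * #F at h1
  change 2 * #F' ≤ _ at h2
  have := w'.arc_lt _ hac'
  simp only at this
  omega

lemma Noncrossing.eq_of_arcMinima_eq_s2 {w w' : Matching n} (hw : Noncrossing w)
    (hw' : Noncrossing w') (hmin : arcMinima w = arcMinima w') : w = w' := by
  have hsub : ∀ {w w' : Matching n}, Noncrossing w → Noncrossing w' →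
      arcMinima w = arcMinima w' → w.arcs ⊆ w'.arcs := by
    intro w w' hw hw' hmin ⟨a, c⟩ hac
    have ha : a ∈ arcMinima w' := hmin ▸ mem_image_of_mem Prod.fst hac
    obtain ⟨⟨a', c'⟩, hac', rfl⟩ := mem_image.1 ha
    rwa [le_antisymm (hw.snd_le_of_arcMinima_eq hw' hmin hac hac')
      (hw'.snd_le_of_arcMinima_eq hw hmin.symm hac' hac)]
  exact Matching.ext_arcs (Subset.antisymm (hsub hw hw' hmin) (hsub hw' hw hmin.symm))

end Noncrossing

lemma dominates_firstRow {n : ℕ} {S T : SYT n} (h : ∀ k, T.entry 0 k ≤ S.entry 0 k) :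
    Dominates (firstRow T) (firstRow S) := by
  intro v
  simp only [firstRow, filter_image]
  rw [card_image_of_injective _ (T.row_mono 0).injective]
  refine card_image_le.trans (card_le_card fun k hk => ?_)
  simp only [mem_filter, mem_univ, true_and] at hk ⊢
  exact (h k).trans hk

theorem stmt2_general (n : ℕ) (S T : SYT n)
    (hrow : ∀ k : Fin n, T.entry 0 k ≤ S.entry 0 k)
    (m : Matching n) (hm : m.arcs = columnArcs T)
    (w : Matching n) (hw : Noncrossing w) (hmin : arcMinima w = firstRow S) :
    Reachable m w := by
  have hdom : Dominates (arcMinima m) (arcMinima w) := by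
    rw [Matching.arcMinima_of_arcs_eq_columnArcs hm, hmin]
    exact dominates_firstRow hrow
  obtain ⟨M, hmM, hM⟩ :=
    (Matching.nonnesting_of_arcs_eq_columnArcs hm).exists_reachable_arcMinima_eq hdom
  obtain ⟨w', hMw', hw', hmin'⟩ := M.exists_reachable_noncrossing
  rw [← hw'.eq_of_arcMinima_eq_s2 hw (hmin'.trans hM)]
  exact hmM.trans hMw'

/-- If every first-row entry of `S` is at least the corresponding first-row entry of
`T`, `m` is the column matching of `T`, and `w` is a noncrossing matching whose
arc-minima are the first-row entries of `S`, then `w` is reachable from `m`. -/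
theorem stmt2 (n : ℕ) (hn : 1 ≤ n) (S T : SYT n)
    (hrow : ∀ k : Fin n, T.entry 0 k ≤ S.entry 0 k)
    (m : Matching n) (hm : m.arcs = columnArcs T)
    (w : Matching n) (hw : Noncrossing w) (hmin : arcMinima w = firstRow S) :
    Reachable m w :=
  stmt2_general n S T hrow m hm w hw hmin
end

section
/- Let n ≥ 1 and let m' be a perfect matching of {1,…,2n} obtained from a perfect matching m by a single resolution step (i.e., a crossing pair of arcs {a,c},{b,d} with a<b<c<d of m is replaced either by {a,b},{c,d} or by {a,d},{b,c}, all other arcs unchanged). Then the number of crossing pairs of arcs of m' is strictly smaller than the number of crossing pairs of arcs of m. -/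
instance (p q : ℕ × ℕ) : Decidable (Crosses p q) := by unfold Crosses; infer_instance

/-- The number of (unordered) crossing pairs of arcs of a matching: since each arc is
written `(min, max)` and `Crosses p q` forces `p.1 < q.1`, each unordered crossing
pair is counted exactly once. -/
def crossNum {n : ℕ} (m : Matching n) : ℕ :=
  ((m.arcs ×ˢ m.arcs).filter (fun pq : (ℕ × ℕ) × (ℕ × ℕ) => Crosses pq.1 pq.2)).card

/-!
Split the arcs of `m` into the crossing pair `(a,c), (b,d)` and the rest `R`. There is one crossing inside the pair and none inside a resolved pair, and the
crossings within `R` do not change. An arc `r` of `R` has its endpoints off `{a,b,c,d}`, and it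
crosses an arc on these four points iff exactly one endpoint of that arc lies under `r`. The points
under `r` form a run `S` of consecutive ones among `a < b < c < d`; if `|S|` is odd, `r` crosses
one arc of every matching of the four points, and if `|S| = 2`, it crosses none of a matching
having `S` as an arc and two of any other. As `(a,c), (b,d)` has no arc of consecutive points,
`r` crosses it at least as often as either resolution.
-/

open Finset

section DoubleSum

variable {α M : Type*} [DecidableEq α] [AddCommMonoid M]

theorem Finset.sum_sum_insert (f : α → α → M) {u : α} {R : Finset α} (hu : u ∉ R) :
    ∑ s ∈ insert u R, ∑ t ∈ insert u R, f s t
      = f u u + ∑ t ∈ R, (f u t + f t u) + ∑ s ∈ R, ∑ t ∈ R, f s t := by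
  simp only [sum_insert hu, sum_add_distrib]
  abel

theorem Finset.sum_sum_insert_insert (f : α → α → M) {u v : α} {R : Finset α} (huv : u ≠ v)
    (hu : u ∉ R) (hv : v ∉ R) :
    ∑ s ∈ insert u (insert v R), ∑ t ∈ insert u (insert v R), f s t
      = (f u u + f u v + f v u + f v v)
        + ∑ t ∈ R, (f u t + f t u + f v t + f t v) + ∑ s ∈ R, ∑ t ∈ R, f s t := by
  have hu' : u ∉ insert v R := by simp [huv, hu]
  rw [sum_sum_insert f hu', sum_sum_insert f hv, sum_insert hv]
  simp only [sum_add_distrib]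
  abel

theorem Finset.sum_sum_insert_insert_lt [PartialOrder M] [IsOrderedCancelAddMonoid M]
    (f : α → α → M) {u v u' v' : α} {R : Finset α}
    (huv : u ≠ v) (hu : u ∉ R) (hv : v ∉ R) (huv' : u' ≠ v') (hu' : u' ∉ R) (hv' : v' ∉ R)
    (hpair : f u' u' + f u' v' + f v' u' + f v' v' < f u u + f u v + f v u + f v v)
    (hR : ∀ t ∈ R, f u' t + f t u' + f v' t + f t v' ≤ f u t + f t u + f v t + f t v) :
    ∑ s ∈ insert u' (insert v' R), ∑ t ∈ insert u' (insert v' R), f s t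
      < ∑ s ∈ insert u (insert v R), ∑ t ∈ insert u (insert v R), f s t := by
  rw [sum_sum_insert_insert f huv hu hv, sum_sum_insert_insert f huv' hu' hv']
  exact add_lt_add_of_lt_of_le (add_lt_add_of_lt_of_le hpair (sum_le_sum hR)) le_rfl

end DoubleSum

def crossIndicator (s t : ℕ × ℕ) : ℕ := if Crosses s t then 1 else 0

theorem crossNum_eq_sum_sum {n : ℕ} (m : Matching n) :
    crossNum m = ∑ s ∈ m.arcs, ∑ t ∈ m.arcs, crossIndicator s t := by
  rw [crossNum, card_filter, sum_product]
  rfl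

def IsResolution (a b c d : ℕ) (p q : ℕ × ℕ) : Prop :=
  (p = (a, b) ∧ q = (c, d)) ∨ (p = (a, d) ∧ q = (b, c))

section Resolution

variable {a b c d : ℕ} {p q : ℕ × ℕ}

theorem IsResolution.crossIndicator_pair_lt (hab : a < b) (hbc : b < c) (hcd : c < d)
    (hres : IsResolution a b c d p q) :
    crossIndicator p p + crossIndicator p q + crossIndicator q p + crossIndicator q q
      < crossIndicator (a, c) (a, c) + crossIndicator (a, c) (b, d)
        + crossIndicator (b, d) (a, c) + crossIndicator (b, d) (b, d) := by
  rcases hres with ⟨rfl, rfl⟩ | ⟨rfl, rfl⟩ <;>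
    simp only [crossIndicator] <;> split_ifs <;> simp only [Crosses] at * <;> omega

theorem IsResolution.crossIndicator_le (hab : a < b) (hbc : b < c) (hcd : c < d)
    (hres : IsResolution a b c d p q) {t : ℕ × ℕ} (ht : t.1 < t.2)
    (htac : t.1 ≠ a ∧ t.1 ≠ c ∧ t.2 ≠ a ∧ t.2 ≠ c)
    (htbd : t.1 ≠ b ∧ t.1 ≠ d ∧ t.2 ≠ b ∧ t.2 ≠ d) :
    crossIndicator p t + crossIndicator t p + crossIndicator q t + crossIndicator t q
      ≤ crossIndicator (a, c) t + crossIndicator t (a, c)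
        + crossIndicator (b, d) t + crossIndicator t (b, d) := by
  obtain ⟨x, y⟩ := t
  rcases hres with ⟨rfl, rfl⟩ | ⟨rfl, rfl⟩ <;>
    simp only [crossIndicator] <;> split_ifs <;> simp only [Crosses] at * <;> omega

end Resolution

namespace Matching

variable {n : ℕ} (m : Matching n)

theorem eq_or_endpoints_ne {r s : ℕ × ℕ} (hr : r ∈ m.arcs) (hs : s ∈ m.arcs) :
    r = s ∨ (r.1 ≠ s.1 ∧ r.1 ≠ s.2 ∧ r.2 ≠ s.1 ∧ r.2 ≠ s.2) := by
  have share : ∀ k, (k = r.1 ∨ k = r.2) → (k = s.1 ∨ k = s.2) → r = s := by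
    intro k hkr hks
    have hk : k ∈ Icc 1 (2 * n) := by
      rcases hkr with rfl | rfl
      exacts [(m.arc_mem r hr).1, (m.arc_mem r hr).2]
    obtain ⟨_, -, huniq⟩ := m.cover k hk
    exact (huniq r ⟨hr, hkr⟩).trans (huniq s ⟨hs, hks⟩).symm
  by_cases hrs : r = s
  · exact Or.inl hrs
  · exact Or.inr ⟨fun h => hrs (share _ (Or.inl rfl) (Or.inl h)),
      fun h => hrs (share _ (Or.inl rfl) (Or.inr h)),
      fun h => hrs (share _ (Or.inr rfl) (Or.inl h)),
      fun h => hrs (share _ (Or.inr rfl) (Or.inr h))⟩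

theorem crossNum_lt_of_resolution {m' : Matching n} {a b c d : ℕ}
    (hab : a < b) (hbc : b < c) (hcd : c < d)
    (hac : (a, c) ∈ m.arcs) (hbd : (b, d) ∈ m.arcs) {p q : ℕ × ℕ}
    (hres : IsResolution a b c d p q)
    (hm' : m'.arcs = (m.arcs \ {(a, c), (b, d)}) ∪ {p, q}) :
    crossNum m' < crossNum m := by
  set R := m.arcs \ {(a, c), (b, d)}
  have hm : m.arcs = insert (a, c) (insert (b, d) R) := by
    conv_lhs => rw [← sdiff_union_of_subset (insert_subset hac (singleton_subset_iff.2 hbd))]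
    rw [union_comm, insert_union, singleton_union]
  have hm'' : m'.arcs = insert p (insert q R) := by
    rw [hm', union_comm, insert_union, singleton_union]
  have hpq_notMem : p ∉ m.arcs ∧ q ∉ m.arcs := by
    constructor <;> intro hmem <;>
      rcases m.eq_or_endpoints_ne hmem hac with h1 | h1 <;>
      rcases m.eq_or_endpoints_ne hmem hbd with h2 | h2 <;>
      rcases hres with ⟨rfl, rfl⟩ | ⟨rfl, rfl⟩ <;> simp only [Prod.ext_iff] at * <;> omega
  have hR : R ⊆ m.arcs := sdiff_subset
  have hne : ((a, c) : ℕ × ℕ) ≠ (b, d) := by simp only [ne_eq, Prod.mk.injEq]; omega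
  have hpq : p ≠ q := by
    rcases hres with ⟨rfl, rfl⟩ | ⟨rfl, rfl⟩ <;> simp only [ne_eq, Prod.mk.injEq] <;> omega
  rw [crossNum_eq_sum_sum, crossNum_eq_sum_sum, hm, hm'']
  refine sum_sum_insert_insert_lt _ hne (by simp [R]) (by simp [R]) hpq
    (fun h => hpq_notMem.1 (hR h)) (fun h => hpq_notMem.2 (hR h))
    (hres.crossIndicator_pair_lt hab hbc hcd) fun t ht => ?_
  obtain ⟨htm, htne⟩ : t ∈ m.arcs ∧ t ≠ (a, c) ∧ t ≠ (b, d) := by simpa [R] using ht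
  exact hres.crossIndicator_le hab hbc hcd (m.arc_lt t htm)
    ((m.eq_or_endpoints_ne htm hac).resolve_left htne.1)
    ((m.eq_or_endpoints_ne htm hbd).resolve_left htne.2)

end Matching

theorem stmt5_general (n : ℕ) (m m' : Matching n) (h : ResStep m m') :
    crossNum m' < crossNum m := by
  obtain ⟨m₁, m₂, ⟨a, b, c, d, hab, hbc, hcd, hac, hbd, h₁, h₂⟩, rfl | rfl⟩ := h
  · exact m.crossNum_lt_of_resolution hab hbc hcd hac hbd (Or.inl ⟨rfl, rfl⟩) h₁
  · exact m.crossNum_lt_of_resolution hab hbc hcd hac hbd (Or.inr ⟨rfl, rfl⟩) h₂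

/-- A single resolution step strictly decreases the number of crossing pairs. -/
theorem stmt5 (n : ℕ) (hn : 1 ≤ n) (m m' : Matching n) (h : ResStep m m') :
    crossNum m' < crossNum m :=
  stmt5_general n m m' h
end

section
/- Let n ≥ 1, let T be a standard Young tableau of shape (n,n), and let w be the unique permutation of {1,…,2n} such that applying w to every entry of T₀ yields T (i.e., w(T₀(c)) = T(c) for every cell c). Then every directed path from T₀ to T in the tableau graph has exactly inv(w) edges, where inv(w) is the number of pairs i < j with w(i) > w(j). In particular, any two directed paths from T₀ to T have the same number of edges. -/
open Finset

section Inversions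

variable {α : Type*} [LinearOrder α]

def invCount (s : Finset α) (f : α → ℕ) : ℕ :=
  #{p ∈ s ×ˢ s | p.1 < p.2 ∧ f p.2 < f p.1}

theorem invCount_congr {s : Finset α} {f g : α → ℕ} (h : Set.EqOn f g s) :
    invCount s f = invCount s g := by
  unfold invCount
  congr 1
  refine filter_congr fun p hp => ?_
  rw [mem_product] at hp
  rw [h hp.1, h hp.2]

theorem invCount_eq_zero_of_monotoneOn {s : Finset α} {f : α → ℕ} (hf : MonotoneOn f s) :
    invCount s f = 0 := by
  rw [invCount, card_eq_zero, filter_eq_empty_iff]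
  rintro ⟨x, y⟩ hxy ⟨hlt, hrev⟩
  rw [mem_product] at hxy
  exact (hf hxy.1 hxy.2 hlt.le).not_gt hrev

theorem invCount_swap_adjacent {s : Finset α} {f g : α → ℕ} {a b : α} {i : ℕ}
    (hf : Set.InjOn f s) (ha : a ∈ s) (hb : b ∈ s) (hab : a < b)
    (hfa : f a = i) (hfb : f b = i + 1) (hg : ∀ x ∈ s, g x = Equiv.swap i (i + 1) (f x)) :
    invCount s g = invCount s f + 1 := by
  have key : {p ∈ s ×ˢ s | p.1 < p.2 ∧ g p.2 < g p.1} =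
      insert (a, b) {p ∈ s ×ˢ s | p.1 < p.2 ∧ f p.2 < f p.1} := by
    ext ⟨x, y⟩
    simp only [mem_filter, mem_insert, mem_product, Prod.mk.injEq]
    by_cases hs : x ∈ s ∧ y ∈ s
    · rw [hg x hs.1, hg y hs.2]
      have hxa : f x = i ↔ x = a := hfa ▸ hf.eq_iff hs.1 ha
      have hxb : f x = i + 1 ↔ x = b := hfb ▸ hf.eq_iff hs.1 hb
      have hya : f y = i ↔ y = a := hfa ▸ hf.eq_iff hs.2 ha
      have hyb : f y = i + 1 ↔ y = b := hfb ▸ hf.eq_iff hs.2 hb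
      -- the adjacent transposition reverses the order of the values `i, i + 1` only
      rw [Equiv.swap_apply_def, Equiv.swap_apply_def]
      grind
    · grind
  rw [invCount, invCount, key, card_insert_of_notMem]
  simp [hfa, hfb]

end Inversions

theorem List.IsChain.getLast_eq_add_length {β : Type*} {R : β → β → Prop} {φ : β → ℕ}
    (hφ : ∀ x y, R x y → φ y = φ x + 1) :
    ∀ {x : β} {l : List β}, (x :: l).IsChain R →
      φ ((x :: l).getLast (List.cons_ne_nil x l)) = φ x + l.length
  | _, [], _ => rfl
  | x, y :: l, h => by
    rw [List.isChain_cons_cons] at h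
    rw [List.getLast_cons (List.cons_ne_nil y l), getLast_eq_add_length hφ h.2, hφ x y h.1,
      List.length_cons]
    omega

namespace SYT

variable {n : ℕ}

/-- Position `k` of the word is the cell holding `k` in the column-wise filling `T₀`;
outside `1, …, 2n` the word is the identity. -/
def columnWord (S : SYT n) (k : ℕ) : ℕ :=
  if h : 1 ≤ k ∧ k ≤ 2 * n then S.entry ⟨(k - 1) % 2, by omega⟩ ⟨(k - 1) / 2, by omega⟩
  else k

theorem columnWord_cell (S : SYT n) (i : Fin 2) (j : Fin n) :
    S.columnWord (2 * j + 1 + i) = S.entry i j := by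
  rw [columnWord, dif_pos (by omega)]
  congr 1 <;> ext <;> simp <;> omega

theorem exists_cell_of_mem_Icc {k : ℕ} (hk : k ∈ Icc 1 (2 * n)) :
    ∃ (i : Fin 2) (j : Fin n), 2 * (j : ℕ) + 1 + i = k := by
  rw [mem_Icc] at hk
  exact ⟨⟨(k - 1) % 2, by omega⟩, ⟨(k - 1) / 2, by omega⟩, by simp; omega⟩

theorem cell_mem_Icc (i : Fin 2) (j : Fin n) : 2 * (j : ℕ) + 1 + i ∈ Icc 1 (2 * n) := by
  rw [mem_Icc]
  omega

theorem columnWord_injOn (S : SYT n) : Set.InjOn S.columnWord (Icc 1 (2 * n)) := by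
  intro k hk k' hk' h
  obtain ⟨i, j, rfl⟩ := exists_cell_of_mem_Icc hk
  obtain ⟨i', j', rfl⟩ := exists_cell_of_mem_Icc hk'
  rw [columnWord_cell, columnWord_cell] at h
  cases S.inj (a₁ := (i, j)) (a₂ := (i', j')) h
  rfl

theorem invCount_columnWord_of_edge {S T : SYT n} (h : Edge S T) :
    invCount (Icc 1 (2 * n)) T.columnWord = invCount (Icc 1 (2 * n)) S.columnWord + 1 := by
  obtain ⟨i, ⟨j, hj⟩, ⟨j', hj'⟩, hT⟩ := h
  have hjj' : j < j' := (S.row_mono 0).lt_iff_lt.mp (by have := S.col_lt j; omega)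
  refine invCount_swap_adjacent S.columnWord_injOn (a := 2 * j + 1 + (1 : Fin 2))
    (b := 2 * j' + 1 + (0 : Fin 2)) ?_ ?_ ?_ (by rw [columnWord_cell, hj])
    (by rw [columnWord_cell, hj']) fun k hk => ?_
  · exact cell_mem_Icc 1 j
  · exact cell_mem_Icc 0 j'
  · simp only [Fin.isValue, Fin.val_one, Fin.val_zero]
    omega
  · obtain ⟨p, q, rfl⟩ := exists_cell_of_mem_Icc hk
    rw [columnWord_cell, columnWord_cell, hT, Equiv.swap_apply_def]

end SYT

open SYT

theorem stmt7_general (n : ℕ) (T₀ T : SYT n)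
    (hT₀ : ∀ (i : Fin 2) (j : Fin n), T₀.entry i j = 2 * (j : ℕ) + 1 + (i : ℕ))
    (w : Equiv.Perm ℕ) (hw : ∀ (i : Fin 2) (j : Fin n), w (T₀.entry i j) = T.entry i j)
    (L : List (SYT n)) (hchain : List.Chain Edge T₀ L)
    (hlast : (T₀ :: L).getLast (List.cons_ne_nil _ _) = T) :
    L.length = ((Finset.Icc 1 (2 * n) ×ˢ Finset.Icc 1 (2 * n)).filter
      (fun p : ℕ × ℕ => p.1 < p.2 ∧ w p.2 < w p.1)).card := by
  have hT₀_word : Set.EqOn T₀.columnWord id (Icc 1 (2 * n)) := fun k hk => by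
    obtain ⟨i, j, rfl⟩ := exists_cell_of_mem_Icc hk
    rw [columnWord_cell, hT₀, id]
  have hw_word : Set.EqOn w T.columnWord (Icc 1 (2 * n)) := fun k hk => by
    obtain ⟨i, j, rfl⟩ := exists_cell_of_mem_Icc hk
    rw [columnWord_cell, ← hw, hT₀]
  have hpath := hchain.getLast_eq_add_length
    (φ := fun S => invCount (Icc 1 (2 * n)) S.columnWord) fun _ _ => invCount_columnWord_of_edge
  change _ = invCount (Icc 1 (2 * n)) w
  rw [invCount_congr hw_word, ← hlast, hpath, invCount_congr hT₀_word,
    invCount_eq_zero_of_monotoneOn (monotone_id.monotoneOn _), zero_add]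

/-- Every directed path in the tableau graph from `T₀` (the tableau with `1, …, 2n`
down successive columns) to `T` has exactly `inv(w)` edges, where `w` is the
permutation of `{1, …, 2n}` carrying `T₀` to `T` entrywise and `inv(w)` is its number
of inversions within `{1, …, 2n}`. -/
theorem stmt7 (n : ℕ) (hn : 1 ≤ n) (T₀ T : SYT n)
    (hT₀ : ∀ (i : Fin 2) (j : Fin n), T₀.entry i j = 2 * (j : ℕ) + 1 + (i : ℕ))
    (w : Equiv.Perm ℕ) (hw : ∀ (i : Fin 2) (j : Fin n), w (T₀.entry i j) = T.entry i j)
    (L : List (SYT n)) (hchain : List.Chain Edge T₀ L)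
    (hlast : (T₀ :: L).getLast (List.cons_ne_nil _ _) = T) :
    L.length = ((Finset.Icc 1 (2 * n) ×ˢ Finset.Icc 1 (2 * n)).filter
      (fun p : ℕ × ℕ => p.1 < p.2 ∧ w p.2 < w p.1)).card :=
  stmt7_general n T₀ T hT₀ w hw L hchain hlast
end

section
/- Let n ≥ 1 and let T be any standard Young tableau of shape (n,n). Then there exists a directed path in the tableau graph from T₀ to T; that is, T₀ ≤ T in the tableau-graph order. -/
theorem Relation.reflTransGen_of_bounded_potential {α : Type*} {r : α → α → Prop} {a : α}
    (f : α → ℕ) (B : ℕ) (hB : ∀ x, f x ≤ B) (h : ∀ x, x ≠ a → ∃ y, r y x ∧ f x < f y)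
    (x : α) : ReflTransGen r a x := by
  induction hm : B - f x using Nat.strong_induction_on generalizing x with
  | _ m ih =>
    obtain rfl | hx := eq_or_ne x a
    · exact .refl
    obtain ⟨y, hyx, hlt⟩ := h x hx
    exact (ih (B - f y) (by have := hB y; omega) y rfl).tail hyx

theorem Equiv.swap_add_one_lt_swap_add_one {i x y : ℕ} (hxy : x < y) (h : ¬(x = i ∧ y = i + 1)) :
    swap i (i + 1) x < swap i (i + 1) y := by
  simp only [swap_apply_def]
  split_ifs <;> omega

theorem Equiv.swap_add_one_mem_Icc {i x a b : ℕ} (hi : i ∈ Finset.Icc a b)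
    (hi' : i + 1 ∈ Finset.Icc a b) (hx : x ∈ Finset.Icc a b) :
    swap i (i + 1) x ∈ Finset.Icc a b := by
  rw [swap_apply_def]
  split_ifs <;> assumption

namespace SYT

variable {n : ℕ}

theorem ext {S T : SYT n} (h : ∀ p q, S.entry p q = T.entry p q) : S = T := by
  cases S; cases T; congr; funext p q; exact h p q

variable (T : SYT n)

theorem eq_of_entry_eq_s8 {p p' : Fin 2} {q q' : Fin n} (h : T.entry p q = T.entry p' q') :
    p = p' ∧ q = q' :=
  Prod.ext_iff.mp (T.inj (a₁ := (p, q)) (a₂ := (p', q')) h)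

theorem entry_zero_le_entry (p : Fin 2) {c q : Fin n} (hcq : c ≤ q) :
    T.entry 0 c ≤ T.entry p q := by
  have hrow := (T.row_mono 0).monotone hcq
  fin_cases p
  · exact hrow
  · exact hrow.trans (T.col_lt q).le

def topRowSum : ℕ := ∑ q, T.entry 0 q

theorem topRowSum_le : T.topRowSum ≤ 2 * n * n :=
  calc T.topRowSum ≤ ∑ _q : Fin n, 2 * n :=
        Finset.sum_le_sum fun q _ => (Finset.mem_Icc.mp (T.mem_range 0 q)).2
    _ = 2 * n * n := by simp [mul_comm]

section Swap

variable {T} {j k : Fin n} (hjk : j ≠ k) (h : T.entry 0 j + 1 = T.entry 1 k)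

def swapEntries : SYT n where
  entry p q := Equiv.swap (T.entry 0 j) (T.entry 0 j + 1) (T.entry p q)
  mem_range p q := Equiv.swap_add_one_mem_Icc (T.mem_range 0 j) (h ▸ T.mem_range 1 k)
    (T.mem_range p q)
  inj := (Equiv.injective _).comp T.inj
  surj v hv := by
    obtain ⟨p, q, hpq⟩ := T.surj _
      (Equiv.swap_add_one_mem_Icc (T.mem_range 0 j) (h ▸ T.mem_range 1 k) hv)
    exact ⟨p, q, by rw [hpq, Equiv.swap_apply_self]⟩
  row_mono r a b hab := by
    refine Equiv.swap_add_one_lt_swap_add_one (T.row_mono r hab) fun ⟨ha, hb⟩ => ?_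
    have h0 := (T.eq_of_entry_eq_s8 ha).1
    have h1 := (T.eq_of_entry_eq_s8 (hb.trans h)).1
    exact zero_ne_one (h0.symm.trans h1)
  col_lt q := by
    refine Equiv.swap_add_one_lt_swap_add_one (T.col_lt q) fun ⟨h0, h1⟩ => hjk ?_
    exact (T.eq_of_entry_eq_s8 h0).2.symm.trans (T.eq_of_entry_eq_s8 (h1.trans h)).2

theorem edge_swapEntries : Edge (swapEntries hjk h) T := by
  refine ⟨T.entry 0 j, ⟨k, ?_⟩, ⟨j, ?_⟩, fun p q => ?_⟩
  · simp [swapEntries, ← h]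
  · simp [swapEntries]
  · exact (Equiv.swap_apply_self _ _ _).symm.trans (Equiv.swap_apply_def _ _ _)

theorem topRowSum_swapEntries : (swapEntries hjk h).topRowSum = T.topRowSum + 1 := by
  have hrow : ∀ q, (swapEntries hjk h).entry 0 q = T.entry 0 q + if q = j then 1 else 0 := by
    intro q
    have hne : T.entry 0 q ≠ T.entry 0 j + 1 := fun h' =>
      zero_ne_one (T.eq_of_entry_eq_s8 (h'.trans h)).1
    by_cases hq : q = j
    · subst hq; simp [swapEntries]
    · have hne' : T.entry 0 q ≠ T.entry 0 j := fun h' => hq (T.eq_of_entry_eq_s8 h').2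
      simp [swapEntries, Equiv.swap_apply_of_ne_of_ne hne' hne, hq]
  simp only [topRowSum, hrow, Finset.sum_add_distrib, Finset.sum_ite_eq', Finset.mem_univ,
    if_true]

end Swap

section Determination

variable {T} {c : Fin n} (hpre : ∀ q < c, ∀ p : Fin 2, T.entry p q = 2 * q + 1 + p)
include hpre

theorem le_of_two_mul_lt_entry {p : Fin 2} {q : Fin n} (hv : 2 * (c : ℕ) < T.entry p q) :
    c ≤ q := by
  by_contra! hqc
  have := hpre q hqc p
  have := p.isLt
  omega

/-- The columns left of `c` use up `1, …, 2c`, and `T.entry 0 c` is the least entry of the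
remaining columns. -/
theorem entry_zero_of_prefix : T.entry 0 c = 2 * c + 1 := by
  have hlow : 2 * (c : ℕ) < T.entry 0 c := by
    obtain hc | hc := Nat.eq_zero_or_pos (c : ℕ)
    · have := (Finset.mem_Icc.mp (T.mem_range 0 c)).1
      omega
    let c' : Fin n := ⟨c - 1, by omega⟩
    have hc'val : (c' : ℕ) + 1 = c := Nat.sub_add_cancel hc
    have hc' : c' < c := Fin.lt_def.mpr (by omega)
    have hlt := T.row_mono 0 hc'
    have htop := hpre c' hc' 0
    have hbot := hpre c' hc' 1
    have hne : T.entry 0 c ≠ T.entry 1 c' := fun h' => zero_ne_one (T.eq_of_entry_eq_s8 h').1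
    simp only [Fin.val_zero, Fin.val_one] at htop hbot
    omega
  have hv : 2 * (c : ℕ) + 1 ∈ Finset.Icc 1 (2 * n) := by
    have := c.isLt
    simp only [Finset.mem_Icc]
    omega
  obtain ⟨p, q, hpq⟩ := T.surj _ hv
  have := T.entry_zero_le_entry p (le_of_two_mul_lt_entry hpre (p := p) (q := q) (by omega))
  omega

theorem entry_one_of_prefix
    (hvert : ∀ j k : Fin n, j ≠ k → T.entry 0 j + 1 ≠ T.entry 1 k) :
    T.entry 1 c = 2 * c + 2 := by
  have htop := entry_zero_of_prefix hpre
  have hcol := T.col_lt c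
  by_contra hne
  have hv : T.entry 1 c - 1 ∈ Finset.Icc 1 (2 * n) := by
    have := T.mem_range 1 c
    simp only [Finset.mem_Icc] at this ⊢
    omega
  obtain ⟨p, q, hpq⟩ := T.surj _ hv
  have hcq : c ≤ q := le_of_two_mul_lt_entry hpre (by rw [hpq]; omega)
  fin_cases p
  · have hqc : q = c := by
      by_contra hqc
      exact hvert q c hqc (by simp only [Fin.zero_eta] at hpq; omega)
    subst hqc
    simp only [Fin.zero_eta] at hpq
    omega
  · have := (T.row_mono 1).monotone hcq
    simp only [Fin.mk_one] at hpq
    omega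

end Determination

theorem entry_eq_of_forall_descent_vertical
    (hvert : ∀ j k : Fin n, j ≠ k → T.entry 0 j + 1 ≠ T.entry 1 k) (p : Fin 2) (q : Fin n) :
    T.entry p q = 2 * q + 1 + p := by
  induction q using WellFoundedLT.induction generalizing p with
  | ind c ih =>
    fin_cases p
    · simpa using entry_zero_of_prefix ih
    · simpa using entry_one_of_prefix ih hvert

end SYT

theorem stmt8_general (n : ℕ) (T₀ T : SYT n)
    (hT₀ : ∀ (i : Fin 2) (j : Fin n), T₀.entry i j = 2 * (j : ℕ) + 1 + (i : ℕ)) :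
    TabLE T₀ T := by
  refine Relation.reflTransGen_of_bounded_potential SYT.topRowSum (2 * n * n) SYT.topRowSum_le
    (fun S hS => ?_) T
  obtain ⟨j, k, hjk, h⟩ : ∃ j k, j ≠ k ∧ S.entry 0 j + 1 = S.entry 1 k := by
    by_contra! hvert
    exact hS (SYT.ext fun p q => by rw [hT₀, S.entry_eq_of_forall_descent_vertical hvert])
  exact ⟨_, SYT.edge_swapEntries hjk h, by rw [SYT.topRowSum_swapEntries]; omega⟩

/-- Every standard Young tableau of shape `(n,n)` is reachable from `T₀` (the tableau
with `1, …, 2n` down successive columns) by a directed path in the tableau graph. -/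
theorem stmt8 (n : ℕ) (hn : 1 ≤ n) (T₀ T : SYT n)
    (hT₀ : ∀ (i : Fin 2) (j : Fin n), T₀.entry i j = 2 * (j : ℕ) + 1 + (i : ℕ)) :
    TabLE T₀ T :=
  stmt8_general n T₀ T hT₀
end
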